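/- If A ⊂ ℝ^d is Borel and N is countable, then dim_F (A ∪ N) = dim_F A. -/

import Mathlib

open MeasureTheory Real Filter Topology

noncomputable def ftE {d : ℕ} (μ : Measure (EuclideanSpace ℝ (Fin d)))
    (ξ : EuclideanSpace ℝ (Fin d)) : ℂ :=
  ∫ x, Complex.exp ((-2 * Real.pi * (inner ℝ ξ x : ℝ)) * Complex.I) ∂μ

/-- `|μ̂(ξ)| ≤ C|ξ|^{-s/2}` for some `C` (for all `ξ ≠ 0`; at `ξ = 0` the
bound `|ξ|^{-s/2} = ∞` is vacuous). -/
def ftDecay {d : ℕ} (μ : Measure (EuclideanSpace ℝ (Fin d))) (s : ℝ) : Prop :=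
  ∃ C : ℝ, ∀ ξ : EuclideanSpace ℝ (Fin d), ξ ≠ 0 →
    ‖ftE μ ξ‖ ≤ C * ‖ξ‖ ^ (-s / 2)

noncomputable def fourierDimMeasure {d : ℕ} (μ : Measure (EuclideanSpace ℝ (Fin d))) : ℝ :=
  sSup {s : ℝ | s ∈ Set.Icc (0:ℝ) d ∧ ftDecay μ s}

noncomputable def fourierDimSet {d : ℕ} (A : Set (EuclideanSpace ℝ (Fin d))) : ℝ :=
  sSup {s : ℝ | s ∈ Set.Icc (0:ℝ) d ∧
    ∃ μ : Measure (EuclideanSpace ℝ (Fin d)),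
      IsProbabilityMeasure μ ∧ μ A = 1 ∧ ftDecay μ s}

section Stmt6Aux

noncomputable def phi (r : ℝ) : ℂ := Complex.exp ((-2 * Real.pi * (r : ℝ)) * Complex.I)

noncomputable def cc (u : ℝ) : ℂ := ((-2 * Real.pi * u : ℝ) : ℂ) * Complex.I

lemma phi_apply (r : ℝ) : phi r = Complex.exp (((-2 * Real.pi * r : ℝ) : ℂ) * Complex.I) := by
  unfold phi; push_cast; ring_nf

lemma norm_phi (r : ℝ) : ‖phi r‖ = 1 := by
  rw [phi_apply, Complex.norm_exp_ofReal_mul_I]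

lemma abs_phi (r : ℝ) : ‖phi r‖ = 1 := by
  exact norm_phi r

lemma phi_add (a b : ℝ) : phi (a + b) = phi a * phi b := by
  unfold phi; rw [← Complex.exp_add]; congr 1; push_cast; ring

lemma conj_phi (r : ℝ) : (starRingEnd ℂ) (phi r) = phi (-r) := by
  unfold phi
  rw [← Complex.exp_conj]
  congr 1
  simp only [map_mul, map_neg, map_ofNat, Complex.conj_I, Complex.conj_ofReal]
  push_cast; ring

lemma cc_ne {u : ℝ} (hu : u ≠ 0) : cc u ≠ 0 := by
  unfold cc
  apply mul_ne_zero _ Complex.I_ne_zero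
  norm_cast
  exact mul_ne_zero (mul_ne_zero (by norm_num) Real.pi_ne_zero) hu

lemma phi_mul (t u : ℝ) : phi (t * u) = Complex.exp (cc u * t) := by
  rw [phi_apply]; unfold cc; congr 1; push_cast; ring

noncomputable def Kk (T u : ℝ) : ℂ :=
  if u = 0 then ((2 * T : ℝ) : ℂ)
  else (Complex.exp (cc u * T) - Complex.exp (cc u * (-(T:ℂ)))) / cc u

lemma integral_phi (T u : ℝ) : (∫ t in (-T)..T, phi (t * u)) = Kk T u := by
  rcases eq_or_ne u 0 with h | h
  · subst h
    simp only [mul_zero, Kk, if_pos rfl]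
    rw [show phi 0 = 1 by rw [phi_apply]; push_cast; simp]
    simp [intervalIntegral.integral_const]
    push_cast
    ring
  · simp only [phi_mul]
    rw [integral_exp_mul_complex (cc_ne h), Kk, if_neg h]
    push_cast
    ring_nf

lemma norm_Kk_le {T : ℝ} (hT : 0 ≤ T) (u : ℝ) : ‖Kk T u‖ ≤ 2 * T := by
  rw [← integral_phi]
  have := intervalIntegral.norm_integral_le_of_norm_le_const
    (C := 1) (f := fun t => phi (t * u)) (a := -T) (b := T) (fun t _ => (norm_phi _).le)
  have h2 : (1:ℝ) * |T - (-T)| = 2 * T := by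
    rw [abs_of_nonneg (by linarith : (0:ℝ) ≤ T - (-T))]; ring
  rw [← h2]; exact this

lemma norm_Kk_le' {u : ℝ} (hu : u ≠ 0) (T : ℝ) : ‖Kk T u‖ ≤ (Real.pi * |u|)⁻¹ := by
  have hpi := Real.pi_pos
  have hau : 0 < |u| := abs_pos.mpr hu
  rw [Kk, if_neg hu, norm_div]
  have h1T : ‖Complex.exp (cc u * (T:ℂ))‖ = 1 := by
    rw [show cc u * (T:ℂ) = ((-2*Real.pi*u*T : ℝ):ℂ) * Complex.I by unfold cc; push_cast; ring,
      Complex.norm_exp_ofReal_mul_I]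
  have h1T' : ‖Complex.exp (cc u * (-(T:ℂ)))‖ = 1 := by
    rw [show cc u * (-(T:ℂ)) = ((2*Real.pi*u*T : ℝ):ℂ) * Complex.I by unfold cc; push_cast; ring,
      Complex.norm_exp_ofReal_mul_I]
  have hc : ‖cc u‖ = 2 * Real.pi * |u| := by
    unfold cc
    rw [norm_mul, Complex.norm_I, mul_one, Complex.norm_real, Real.norm_eq_abs]
    rw [abs_mul, abs_mul]
    simp [abs_of_nonneg hpi.le]
  have hnum : ‖Complex.exp (cc u * T) - Complex.exp (cc u * (-(T:ℂ)))‖ ≤ 2 := by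
    refine (norm_sub_le _ _).trans ?_
    rw [h1T, h1T']; norm_num
  rw [hc]
  rw [show (Real.pi * |u|)⁻¹ = 2 / (2 * Real.pi * |u|) by field_simp]
  exact div_le_div_of_nonneg_right hnum (by positivity) |>.trans_eq rfl

set_option maxHeartbeats 1600000 in
lemma no_decay_of_atom {d : ℕ} (μ : Measure (EuclideanSpace ℝ (Fin d))) [IsProbabilityMeasure μ]
    {s : ℝ} (hs : 0 < s) (hsd : s ≤ (d:ℝ)) (hdec : ftDecay μ s) (x₀ : EuclideanSpace ℝ (Fin d))
    (hx : 0 < μ {x₀}) : False := by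
  have hd : 0 < d := by
    rcases Nat.eq_zero_or_pos d with h | h
    · subst h; norm_num at hsd; linarith
    · exact h
  set e : EuclideanSpace ℝ (Fin d) := EuclideanSpace.single ⟨0, hd⟩ (1:ℝ) with he_def
  have he : ‖e‖ = 1 := by rw [he_def, EuclideanSpace.norm_single]; norm_num
  have hee : e ≠ 0 := by intro h; rw [h] at he; simp at he
  set f : EuclideanSpace ℝ (Fin d) → ℝ := fun x => inner ℝ e x with hf_def
  have hfc : Continuous f := continuous_const.inner continuous_id
  set F : ℝ → ℂ := fun t => ∫ x, phi (t * f x) ∂μ with hF_def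
  have hφc : Continuous phi := Complex.continuous_exp.comp (by continuity)
  have hFt : ∀ t : ℝ, F t = ftE μ (t • e) := by
    intro t
    rw [hF_def, ftE]
    refine integral_congr_ae (ae_of_all _ fun x => ?_)
    simp only [hf_def, real_inner_smul_left]
    rfl
  have hnormF : ∀ t, ‖F t‖ ≤ 1 := by
    intro t
    calc ‖F t‖ ≤ ∫ x, ‖phi (t * f x)‖ ∂μ := norm_integral_le_integral_norm _
    _ = 1 := by simp [abs_phi]
  obtain ⟨C, hC⟩ := hdec
  set σ : ℝ := min s 2⁻¹ with hσdef
  have hσ0 : 0 < σ := lt_min hs (by norm_num)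
  have hσ1 : σ < 1 := lt_of_le_of_lt (min_le_right _ _) (by norm_num)
  set D : ℝ := max C 1 with hDdef
  have hD1 : (1:ℝ) ≤ D := le_max_right _ _
  have hD0 : (0:ℝ) ≤ D := by linarith
  have hFD : ∀ t : ℝ, t ≠ 0 → ‖F t‖ ≤ D * |t| ^ (-σ / 2) := by
    intro t ht
    have habs : 0 < |t| := abs_pos.mpr ht
    rcases le_or_gt 1 |t| with h1 | h1
    · have hne : t • e ≠ 0 := smul_ne_zero ht hee
      have hnorm : ‖t • e‖ = |t| := by rw [norm_smul, he, mul_one, Real.norm_eq_abs]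
      have h2 := hC (t • e) hne
      rw [hnorm] at h2
      calc ‖F t‖ = ‖ftE μ (t • e)‖ := by rw [hFt t]
      _ ≤ C * |t| ^ (-s/2) := h2
      _ ≤ D * |t| ^ (-σ/2) := by
          apply mul_le_mul (le_max_left _ _) ?_ (Real.rpow_nonneg habs.le _) hD0
          apply Real.rpow_le_rpow_of_exponent_le h1
          have : σ ≤ s := min_le_left _ _
          linarith
    · calc ‖F t‖ ≤ 1 := hnormF t
      _ ≤ |t| ^ (-σ/2) :=
          Real.one_le_rpow_of_pos_of_le_one_of_nonpos habs h1.le (by linarith)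
      _ ≤ D * |t| ^ (-σ/2) := le_mul_of_one_le_left (Real.rpow_nonneg habs.le _) hD1
  have hFsq : ∀ t : ℝ, t ≠ 0 → ‖F t‖^2 ≤ D^2 * |t| ^ (-σ) := by
    intro t ht
    have habs : 0 < |t| := abs_pos.mpr ht
    calc ‖F t‖^2 ≤ (D * |t| ^ (-σ/2))^2 := by
          apply pow_le_pow_left₀ (norm_nonneg _) (hFD t ht)
    _ = D^2 * (|t| ^ (-σ/2))^2 := by ring
    _ = D^2 * |t|^(-σ) := by
          rw [← Real.rpow_natCast (|t| ^ (-σ/2)) 2, ← Real.rpow_mul habs.le]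
          norm_num
  have hFcont : Continuous F := by
    rw [hF_def]
    apply continuous_of_dominated (bound := fun _ => (1:ℝ))
    · exact fun t => ((hφc.comp (continuous_const.mul hfc))).aestronglyMeasurable
    · exact fun t => ae_of_all _ fun x => (norm_phi _).le
    · exact integrable_const 1
    · exact ae_of_all _ fun x => hφc.comp (continuous_id.mul continuous_const)
  have hint : ∀ t : ℝ, Integrable
      (fun p : EuclideanSpace ℝ (Fin d) × EuclideanSpace ℝ (Fin d) =>
        phi (t * (f p.1 - f p.2))) (μ.prod μ) := by
    intro t
    refine (integrable_const (1:ℝ)).mono' ?_ (ae_of_all _ fun p => (norm_phi _).le)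
    exact (hφc.comp (continuous_const.mul
      ((hfc.comp continuous_fst).sub (hfc.comp continuous_snd)))).aestronglyMeasurable
  have hfact : ∀ t : ℝ, ∫ p, phi (t * (f p.1 - f p.2)) ∂(μ.prod μ)
      = F t * (starRingEnd ℂ) (F t) := by
    intro t
    rw [MeasureTheory.integral_prod _ (hint t)]
    have h1 : ∀ x y : EuclideanSpace ℝ (Fin d),
        phi (t * (f x - f y)) = phi (t * f x) * phi (-(t * f y)) := by
      intro x y; rw [← phi_add]; congr 1; ring
    simp_rw [h1, integral_const_mul, integral_mul_const]
    congr 1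
    rw [hF_def, ← integral_conj]
    exact integral_congr_ae (ae_of_all _ fun y => by simp only [conj_phi])
  have hswap : ∀ T : ℝ, 0 < T →
      ∫ p, Kk T (f p.1 - f p.2) ∂(μ.prod μ)
        = ∫ t in Set.Ioc (-T) T, F t * (starRingEnd ℂ) (F t) := by
    intro T hT
    have hle : (-T) ≤ T := by linarith
    haveI : IsFiniteMeasure (volume.restrict (Set.Ioc (-T) T)) :=
      ⟨by rw [Measure.restrict_apply_univ]; exact measure_Ioc_lt_top⟩
    calc ∫ p, Kk T (f p.1 - f p.2) ∂(μ.prod μ)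
        = ∫ p, (∫ t in Set.Ioc (-T) T, phi (t * (f p.1 - f p.2))) ∂(μ.prod μ) := by
          refine integral_congr_ae (ae_of_all _ fun p => ?_)
          show Kk T (f p.1 - f p.2) = ∫ t in Set.Ioc (-T) T, phi (t * (f p.1 - f p.2))
          rw [← integral_phi T (f p.1 - f p.2), intervalIntegral.integral_of_le hle]
      _ = ∫ t in Set.Ioc (-T) T, (∫ p, phi (t * (f p.1 - f p.2)) ∂(μ.prod μ)) := by
          apply MeasureTheory.integral_integral_swap
          refine (integrable_const (1:ℝ)).mono' ?_ (ae_of_all _ fun q => (norm_phi _).le)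
          exact (hφc.comp (continuous_snd.mul
            ((hfc.comp (continuous_fst.comp continuous_fst)).sub
              (hfc.comp (continuous_snd.comp continuous_fst))))).aestronglyMeasurable
      _ = _ := integral_congr_ae (ae_of_all _ fun t => hfact t)
  have hFsqInt : ∀ a b : ℝ, IntervalIntegrable (fun t => ‖F t‖^2) volume a b :=
    fun a b => ((hFcont.norm.pow 2)).intervalIntegrable a b
  have hmono : ∀ T : ℝ, 0 < T → (∫ t in (0:ℝ)..T, ‖F t‖^2) ≤ D^2 * T^(1-σ)/(1-σ) ∧
      (∫ t in (0:ℝ)..T, ‖F (-t)‖^2) ≤ D^2 * T^(1-σ)/(1-σ) := by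
    intro T hT
    have hJi : IntervalIntegrable (fun t : ℝ => D^2 * t^(-σ)) volume 0 T :=
      (intervalIntegral.intervalIntegrable_rpow' (by linarith)).const_mul _
    have hae : ∀ᵐ t ∂(volume.restrict (Set.Icc (0:ℝ) T)), t ≠ 0 := by
      refine ae_iff.mpr ?_
      rw [show {a : ℝ | ¬ a ≠ 0} = {0} by ext a; simp]
      rw [Measure.restrict_apply (measurableSet_singleton 0)]
      exact measure_mono_null Set.inter_subset_left Real.volume_singleton
    have key : ∀ G : ℝ → ℝ, (∀ t, t ≠ 0 → G t ≤ D^2 * |t|^(-σ)) →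
        IntervalIntegrable G volume 0 T →
        (∫ t in (0:ℝ)..T, G t) ≤ D^2 * T^(1-σ)/(1-σ) := by
      intro G hG hGi
      have h1 : (∫ t in (0:ℝ)..T, G t) ≤ ∫ t in (0:ℝ)..T, D^2 * t^(-σ) := by
        apply intervalIntegral.integral_mono_ae_restrict hT.le hGi hJi
        filter_upwards [hae, ae_restrict_mem measurableSet_Icc] with t ht htI
        calc G t ≤ D^2 * |t|^(-σ) := hG t ht
        _ = D^2 * t^(-σ) := by rw [abs_of_nonneg htI.1]
      refine h1.trans ?_
      rw [intervalIntegral.integral_const_mul, integral_rpow (Or.inl (by linarith))]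
      rw [Real.zero_rpow (by intro h; linarith : -σ + 1 ≠ 0)]
      rw [show -σ + 1 = 1 - σ by ring, sub_zero]
      apply le_of_eq; ring
    constructor
    · exact key _ (fun t ht => hFsq t ht) (hFsqInt 0 T)
    · refine key _ (fun t ht => ?_) ?_
      · have h2 := hFsq (-t) (neg_ne_zero.mpr ht); rwa [abs_neg] at h2
      · exact ((hFcont.comp continuous_neg).norm.pow 2).intervalIntegrable 0 T
  have hbound : ∀ T : ℝ, 0 < T →
      ‖∫ p, Kk T (f p.1 - f p.2) ∂(μ.prod μ)‖ ≤ 2 * (D^2 * T^(1-σ)/(1-σ)) := by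
    intro T hT
    have hle : (-T) ≤ T := by linarith
    rw [hswap T hT, ← intervalIntegral.integral_of_le hle]
    calc ‖∫ t in (-T)..T, F t * (starRingEnd ℂ) (F t)‖
        ≤ ∫ t in (-T)..T, ‖F t * (starRingEnd ℂ) (F t)‖ :=
          intervalIntegral.norm_integral_le_integral_norm hle
      _ = ∫ t in (-T)..T, ‖F t‖^2 := by
          refine intervalIntegral.integral_congr fun t _ => ?_
          rw [norm_mul, RCLike.norm_conj]; ring
      _ = (∫ t in (-T)..(0:ℝ), ‖F t‖^2) + ∫ t in (0:ℝ)..T, ‖F t‖^2 :=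
          (intervalIntegral.integral_add_adjacent_intervals (hFsqInt _ _) (hFsqInt _ _)).symm
      _ ≤ 2 * (D^2 * T^(1-σ)/(1-σ)) := by
          have hneg := intervalIntegral.integral_comp_neg (a := (0:ℝ)) (b := T)
            (fun t => ‖F t‖^2)
          simp only [neg_zero] at hneg
          rw [← hneg]
          have h3 := hmono T hT
          linarith [h3.1, h3.2]
  -- dominated convergence
  set Sdiag : Set (EuclideanSpace ℝ (Fin d) × EuclideanSpace ℝ (Fin d)) :=
    {p | f p.1 = f p.2} with hS_def
  have hSm : MeasurableSet Sdiag :=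
    (isClosed_eq (hfc.comp continuous_fst) (hfc.comp continuous_snd)).measurableSet
  have hKmeas : ∀ T : ℝ, Measurable (Kk T) := by
    intro T
    unfold Kk
    refine Measurable.ite ?_ measurable_const ?_
    · exact measurableSet_eq
    · apply Measurable.div
      · apply Measurable.sub <;>
        · apply Complex.measurable_exp.comp
          apply Measurable.mul _ measurable_const
          unfold cc
          exact (Complex.measurable_ofReal.comp (by fun_prop)).mul measurable_const
      · unfold cc
        exact (Complex.measurable_ofReal.comp (by fun_prop)).mul measurable_const
  set G : ℕ → (EuclideanSpace ℝ (Fin d) × EuclideanSpace ℝ (Fin d)) → ℂ :=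
    fun n p => ((2*((n:ℝ)+1))⁻¹ : ℝ) • Kk ((n:ℝ)+1) (f p.1 - f p.2) with hG_def
  have hGmeas : ∀ n : ℕ, AEStronglyMeasurable (G n) (μ.prod μ) := by
    intro n
    exact (((hKmeas _).comp
      ((hfc.comp continuous_fst).sub (hfc.comp continuous_snd)).measurable).const_smul
        ((2*((n:ℝ)+1))⁻¹ : ℝ)).aestronglyMeasurable
  have hlim : Tendsto (fun n : ℕ => ∫ p, G n p ∂(μ.prod μ)) atTop
      (𝓝 (∫ p, Sdiag.indicator (fun _ => (1:ℂ)) p ∂(μ.prod μ))) := by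
    apply tendsto_integral_of_dominated_convergence (fun _ => (1:ℝ)) hGmeas (integrable_const 1)
    · intro n
      refine ae_of_all _ fun p => ?_
      have hT : (0:ℝ) < (n:ℝ)+1 := by positivity
      rw [hG_def]
      rw [norm_smul, Real.norm_eq_abs, abs_of_nonneg (by positivity)]
      calc (2*((n:ℝ)+1))⁻¹ * ‖Kk ((n:ℝ)+1) (f p.1 - f p.2)‖
          ≤ (2*((n:ℝ)+1))⁻¹ * (2*((n:ℝ)+1)) := by
            exact mul_le_mul_of_nonneg_left (norm_Kk_le hT.le _) (by positivity)
        _ = 1 := inv_mul_cancel₀ (by positivity)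
    · refine ae_of_all _ fun p => ?_
      rcases eq_or_ne (f p.1 - f p.2) 0 with h | h
      · have hp : p ∈ Sdiag := by rw [hS_def]; exact Set.mem_setOf.mpr (sub_eq_zero.mp h)
        rw [Set.indicator_of_mem hp]
        have hconst : ∀ n : ℕ, G n p = 1 := by
          intro n
          have hT : ((n:ℝ)+1) ≠ 0 := by positivity
          rw [hG_def]
          show ((2*((n:ℝ)+1))⁻¹ : ℝ) • Kk ((n:ℝ)+1) (f p.1 - f p.2) = 1
          rw [h, Kk, if_pos rfl, Complex.real_smul, ← Complex.ofReal_mul,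
            inv_mul_cancel₀ (by positivity : (2*((n:ℝ)+1)) ≠ 0), Complex.ofReal_one]
        rw [show (fun n : ℕ => G n p) = fun _ => (1:ℂ) from funext hconst]
        exact tendsto_const_nhds
      · have hp : p ∉ Sdiag := by rw [hS_def]; exact fun hmem => h (sub_eq_zero.mpr hmem)
        rw [Set.indicator_of_notMem hp]
        apply squeeze_zero_norm (a := fun n : ℕ =>
          (2*((n:ℝ)+1))⁻¹ * (Real.pi * |f p.1 - f p.2|)⁻¹)
        · intro n
          have hT : (0:ℝ) < (n:ℝ)+1 := by positivity
          rw [hG_def]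
          show ‖((2*((n:ℝ)+1))⁻¹ : ℝ) • Kk ((n:ℝ)+1) (f p.1 - f p.2)‖ ≤ _
          rw [norm_smul, Real.norm_eq_abs, abs_of_nonneg (by positivity)]
          exact mul_le_mul_of_nonneg_left (norm_Kk_le' h _) (by positivity)
        · have h1 : Tendsto (fun n : ℕ => 2*((n:ℝ)+1)) atTop atTop := by
            apply Tendsto.const_mul_atTop (by norm_num : (0:ℝ) < 2)
            exact tendsto_atTop_add_const_right _ 1 tendsto_natCast_atTop_atTop
          have h2 : Tendsto (fun n : ℕ => (2*((n:ℝ)+1))⁻¹) atTop (𝓝 0) :=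
            h1.inv_tendsto_atTop
          have h3 := h2.mul_const ((Real.pi * |f p.1 - f p.2|)⁻¹)
          simpa using h3
  -- identify the limit and bound it below
  have hindint : ∫ p, Sdiag.indicator (fun _ => (1:ℂ)) p ∂(μ.prod μ)
      = ((((μ.prod μ) Sdiag).toReal : ℝ) : ℂ) := by
    rw [integral_indicator_const _ hSm]
    simp [Measure.real]
  have hge : (μ {x₀}).toReal * (μ {x₀}).toReal ≤ ((μ.prod μ) Sdiag).toReal := by
    have h1 : (μ.prod μ) ({x₀} ×ˢ ({x₀} : Set (EuclideanSpace ℝ (Fin d)))) ≤ (μ.prod μ) Sdiag := by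
      apply measure_mono
      rintro ⟨a, b⟩ ⟨ha, hb⟩
      simp only [Set.mem_singleton_iff] at ha hb
      rw [hS_def]; exact Set.mem_setOf.mpr (by rw [ha, hb])
    rw [Measure.prod_prod] at h1
    have h2 := ENNReal.toReal_mono (measure_ne_top (μ.prod μ) Sdiag) h1
    rwa [ENNReal.toReal_mul] at h2
  -- upper bound tendsto 0
  have hbnd : ∀ n : ℕ, ‖∫ p, G n p ∂(μ.prod μ)‖
      ≤ (D^2/(1-σ)) * (2 * (((n:ℝ)+1)^(1-σ) * (2*((n:ℝ)+1))⁻¹)) := by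
    intro n
    have hT : (0:ℝ) < (n:ℝ)+1 := by positivity
    rw [hG_def]
    simp only [integral_smul]
    rw [norm_smul, Real.norm_eq_abs, abs_of_nonneg (by positivity)]
    calc (2*((n:ℝ)+1))⁻¹ * ‖∫ p, Kk ((n:ℝ)+1) (f p.1 - f p.2) ∂(μ.prod μ)‖
        ≤ (2*((n:ℝ)+1))⁻¹ * (2 * (D^2 * ((n:ℝ)+1)^(1-σ)/(1-σ))) :=
          mul_le_mul_of_nonneg_left (hbound _ hT) (by positivity)
      _ = (D^2/(1-σ)) * (2 * (((n:ℝ)+1)^(1-σ) * (2*((n:ℝ)+1))⁻¹)) := by ring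
  have hbnd0 : Tendsto (fun n : ℕ =>
      (D^2/(1-σ)) * (2 * (((n:ℝ)+1)^(1-σ) * (2*((n:ℝ)+1))⁻¹))) atTop (𝓝 0) := by
    have heq : ∀ n : ℕ, (D^2/(1-σ)) * (2 * (((n:ℝ)+1)^(1-σ) * (2*((n:ℝ)+1))⁻¹))
        = (D^2/(1-σ)) * ((n:ℝ)+1)^(-σ) := by
      intro n
      have hT : (0:ℝ) < (n:ℝ)+1 := by positivity
      have h5 : ((n:ℝ)+1)^(1-σ) = ((n:ℝ)+1) * ((n:ℝ)+1)^(-σ) := by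
        rw [show (1-σ) = 1 + (-σ) by ring, Real.rpow_add hT, Real.rpow_one]
      rw [h5]
      congr 1
      rw [mul_inv]
      rw [show (2:ℝ) * (((n:ℝ)+1) * ((n:ℝ)+1)^(-σ) * (2⁻¹ * ((n:ℝ)+1)⁻¹))
          = (2 * 2⁻¹) * (((n:ℝ)+1) * ((n:ℝ)+1)⁻¹) * ((n:ℝ)+1)^(-σ) by ring]
      rw [mul_inv_cancel₀ hT.ne']
      norm_num
    simp only [heq]
    have h6 : Tendsto (fun n : ℕ => ((n:ℝ)+1)^(-σ)) atTop (𝓝 0) := by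
      have h7 : Tendsto (fun n : ℕ => ((n:ℝ)+1)) atTop atTop :=
        tendsto_atTop_add_const_right _ 1 tendsto_natCast_atTop_atTop
      exact (tendsto_rpow_neg_atTop hσ0).comp h7
    simpa using h6.const_mul (D^2/(1-σ))
  -- conclude
  have hL : ‖((((μ.prod μ) Sdiag).toReal : ℝ) : ℂ)‖ ≤ 0 := by
    rw [← hindint]
    exact le_of_tendsto_of_tendsto' hlim.norm hbnd0 hbnd
  rw [Complex.norm_real, Real.norm_eq_abs] at hL
  have hc0 : 0 < (μ {x₀}).toReal := ENNReal.toReal_pos hx.ne' (measure_ne_top _ _)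
  have hS0 : ((μ.prod μ) Sdiag).toReal ≤ 0 := (le_abs_self _).trans hL
  nlinarith

end Stmt6Aux

theorem stmt_6 {d : ℕ} (A N : Set (EuclideanSpace ℝ (Fin d)))
    (hA : MeasurableSet A) (hN : N.Countable) :
    fourierDimSet (A ∪ N) = fourierDimSet A := by
  classical
  set SA := {s : ℝ | s ∈ Set.Icc (0:ℝ) d ∧
    ∃ μ : Measure (EuclideanSpace ℝ (Fin d)),
      IsProbabilityMeasure μ ∧ μ A = 1 ∧ ftDecay μ s} with hSA_def
  set SB := {s : ℝ | s ∈ Set.Icc (0:ℝ) d ∧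
    ∃ μ : Measure (EuclideanSpace ℝ (Fin d)),
      IsProbabilityMeasure μ ∧ μ (A ∪ N) = 1 ∧ ftDecay μ s} with hSB_def
  have hBA : fourierDimSet (A ∪ N) = sSup SB := rfl
  have hAA : fourierDimSet A = sSup SA := rfl
  rw [hBA, hAA]
  have h1 : SA ⊆ SB := by
    rintro s ⟨hIcc, μ, hprob, hμA, hdec⟩
    refine ⟨hIcc, μ, hprob, ?_, hdec⟩
    refine le_antisymm prob_le_one ?_
    rw [← hμA]
    exact measure_mono Set.subset_union_left
  have h2 : ∀ s ∈ SB, s ≠ 0 → s ∈ SA := by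
    rintro s ⟨⟨hs0, hsd⟩, μ, hprob, hμ, hdec⟩ hne
    have hspos : 0 < s := lt_of_le_of_ne hs0 (Ne.symm hne)
    refine ⟨⟨hs0, hsd⟩, μ, hprob, ?_, hdec⟩
    by_contra hA1
    have hNpos : 0 < μ N := by
      rcases eq_or_ne (μ N) 0 with h | h
      · exfalso
        apply hA1
        refine le_antisymm prob_le_one ?_
        rw [← hμ]
        refine (measure_union_le A N).trans ?_
        rw [h, add_zero]
      · exact lt_of_le_of_ne zero_le (Ne.symm h)
    have hatom : ∃ x ∈ N, 0 < μ {x} := by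
      by_contra h
      push_neg at h
      have hN0 : μ N = 0 := by
        rw [← Set.biUnion_of_singleton N]
        refine (measure_biUnion_null_iff hN).mpr fun x hx => ?_
        exact le_antisymm (h x hx) zero_le
      exact hNpos.ne' hN0
    obtain ⟨x₀, _, hx₀⟩ := hatom
    exact no_decay_of_atom μ hspos hsd hdec x₀ hx₀
  have hbddA : BddAbove SA := ⟨d, fun s hs => hs.1.2⟩
  have hbddB : BddAbove SB := ⟨d, fun s hs => hs.1.2⟩
  rcases SA.eq_empty_or_nonempty with hA0 | hA0
  · have hB0 : SB ⊆ {0} := by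
      intro s hs
      by_contra h
      have := h2 s hs h
      rw [hA0] at this
      exact this
    rcases SB.eq_empty_or_nonempty with hB1 | hB1
    · rw [hA0, hB1]
    · rw [hA0, hB1.subset_singleton_iff.mp hB0]
      rw [csSup_singleton, Real.sSup_empty]
  · refine le_antisymm ?_ (csSup_le_csSup hbddB hA0 h1)
    apply csSup_le (hA0.mono h1)
    intro s hs
    rcases eq_or_ne s 0 with rfl | h
    · obtain ⟨a, ha⟩ := hA0
      exact le_trans ha.1.1 (le_csSup hbddA ha)
    · exact le_csSup hbddA (h2 s hs h)
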